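/- Let $c \in \mathbb{R}^d$ with $c_j > 0$ for all $j$ and $\|c\|_{\ell^1} = \sum c_j \leq 1$, let $\varepsilon > 0$, and let $P_1, \ldots, P_d$ be rank-one orthogonal projections in $M_2(\mathbb{C})$ with $\|P_j - P_k\| \leq \varepsilon$ for all $j,k$. Suppose $Z_1, \ldots, Z_d$ are positive bounded operators with $Z_i Z_j = 0$ for $i \neq j$, $\|Z_j\| \leq 1$, and there is an isometry $V: \mathbb{C}^2 \to H$ with $c_j P_j = V^* Z_j V$ for all $j$. Then for each $j$ and each $\delta \in (0,1)$ with $r \in (0,1)$ satisfying $\sum_{k \neq j} c_k \leq r$: $\max\{\|Z_j\|, 1 - \delta\} \geq \|c\|_{\ell^1}(1 - \varepsilon) - \delta r$. -/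

import Mathlib

/-!
Put `a = Z j + (1 - δ) ∑_{k ≠ j} Z k = ∑ w k • Z k`. Since the `Z k` are self-adjoint and
annihilate each other, `a ^ n` is the sum of the `n`-th powers of the summands, so
`‖a ^ n‖ ≤ d M ^ n` with `M = max ‖Z j‖ (1 - δ)`, and the C*-identity
`‖a ^ 2 ^ n‖ = ‖a‖ ^ 2 ^ n` forces `‖a‖ ≤ M`. Compressing by the isometry `V` gives
`V* a V = ∑ w k c k P k`, of norm at most `M`. On the other hand every `P k` lies within `ε`
of the nonzero projection `P j`, whose norm is at least `1`, so this norm is at least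
`∑ w k c k - ε ∑ c k = ∑ c k - δ ∑_{k ≠ j} c k - ε ∑ c k`.
-/

open Finset

theorem le_of_forall_pow_two_pow_le {x M C : ℝ} (hx : 0 ≤ x) (hM : 0 ≤ M)
    (h : ∀ n : ℕ, x ^ 2 ^ n ≤ C * M ^ 2 ^ n) : x ≤ M := by
  by_contra! hMx
  have hx0 : 0 < x := hM.trans_lt hMx
  have hC : 0 < C := by
    have := h 0
    simp only [pow_zero, pow_one] at this
    exact pos_of_mul_pos_left (hx0.trans_le this) hM
  set q := M / x
  have hq0 : 0 ≤ q := div_nonneg hM hx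
  have hq1 : q < 1 := (div_lt_one hx0).mpr hMx
  obtain ⟨n, hn⟩ := exists_pow_lt_of_lt_one (inv_pos.mpr hC) hq1
  have hle : 1 ≤ C * q ^ 2 ^ n := by
    rw [div_pow, mul_div_assoc', le_div_iff₀ (by positivity), one_mul]
    exact h n
  have hqn : q ^ 2 ^ n ≤ q ^ n := pow_le_pow_of_le_one hq0 hq1.le n.lt_two_pow_self.le
  have := mul_lt_mul_of_pos_left (hqn.trans_lt hn) hC
  rw [mul_inv_cancel₀ hC.ne'] at this
  linarith

theorem IsSelfAdjoint.norm_le_of_norm_pow_le {A : Type*} [NormedRing A] [StarRing A] [CStarRing A]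
    {a : A} (ha : IsSelfAdjoint a) {M C : ℝ} (hM : 0 ≤ M)
    (h : ∀ n, 0 < n → ‖a ^ n‖ ≤ C * M ^ n) : ‖a‖ ≤ M :=
  le_of_forall_pow_two_pow_le (norm_nonneg a) hM fun n => by
    rw [← ha.norm_pow_two_pow]
    exact h _ (Nat.two_pow_pos n)

theorem Finset.sum_mul_sum_of_mul_eq_zero {ι A : Type*} [NonUnitalNonAssocSemiring A]
    (s : Finset ι) (a b : ι → A) (h : ∀ k l, k ≠ l → a k * b l = 0) :
    (∑ k ∈ s, a k) * (∑ l ∈ s, b l) = ∑ k ∈ s, a k * b k := by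
  rw [sum_mul_sum]
  exact sum_congr rfl fun k hk => sum_eq_single_of_mem k hk fun l _ hlk => h k l hlk.symm

theorem sum_smul_pow_of_pairwise_mul_eq_zero {ι R A : Type*} [CommSemiring R] [Semiring A]
    [Algebra R A] (s : Finset ι) {Z : ι → A} (hZ : Pairwise fun i j => Z i * Z j = 0)
    (w : ι → R) (n : ℕ) :
    (∑ k ∈ s, w k • Z k) ^ (n + 1) = ∑ k ∈ s, w k ^ (n + 1) • Z k ^ (n + 1) := by
  induction n with
  | zero => simp
  | succ n ih =>
    rw [pow_succ, ih, sum_mul_sum_of_mul_eq_zero]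
    · simp only [smul_mul_smul_comm, ← pow_succ]
    · intro k l hkl
      rw [smul_mul_smul_comm, pow_succ (Z k), mul_assoc, hZ hkl, mul_zero, smul_zero]

theorem norm_sum_smul_le_of_pairwise_mul_eq_zero {ι 𝕜 A : Type*} [Fintype ι] [RCLike 𝕜]
    [NormedRing A] [StarRing A] [CStarRing A] [NormedAlgebra 𝕜 A] [StarModule 𝕜 A]
    {Z : ι → A} (hZsa : ∀ k, IsSelfAdjoint (Z k)) (hZ : Pairwise fun i j => Z i * Z j = 0)
    (w : ι → ℝ) {M : ℝ} (hM : 0 ≤ M) (hwZ : ∀ k, |w k| * ‖Z k‖ ≤ M) :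
    ‖∑ k, (w k : 𝕜) • Z k‖ ≤ M := by
  have hsa : IsSelfAdjoint (∑ k, (w k : 𝕜) • Z k) :=
    isSelfAdjoint_sum _ fun k _ => .smul (RCLike.conj_ofReal (w k)) (hZsa k)
  refine hsa.norm_le_of_norm_pow_le (C := Fintype.card ι) hM fun n hn => ?_
  obtain ⟨n, rfl⟩ := Nat.exists_eq_add_of_lt hn
  rw [zero_add, sum_smul_pow_of_pairwise_mul_eq_zero _ hZ]
  calc ‖∑ k, (w k : 𝕜) ^ (n + 1) • Z k ^ (n + 1)‖
      ≤ ∑ k, (|w k| * ‖Z k‖) ^ (n + 1) := by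
        refine norm_sum_le_of_le _ fun k _ => ?_
        rw [norm_smul, norm_pow, RCLike.norm_ofReal, mul_pow]
        gcongr
        exact norm_pow_le' _ n.succ_pos
    _ ≤ ∑ _k : ι, M ^ (n + 1) := by gcongr with k; exact hwZ k
    _ = Fintype.card ι * M ^ (n + 1) := by simp

theorem ContinuousLinearMap.norm_adjoint_comp_comp_le {𝕜 E F : Type*} [RCLike 𝕜]
    [NormedAddCommGroup E] [InnerProductSpace 𝕜 E] [CompleteSpace E]
    [NormedAddCommGroup F] [InnerProductSpace 𝕜 F] [CompleteSpace F]
    {V : E →L[𝕜] F} (hV : Isometry V) (a : F →L[𝕜] F) : ‖adjoint V ∘L a ∘L V‖ ≤ ‖a‖ := by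
  have hV1 : ‖V‖ ≤ 1 := opNorm_le_bound _ zero_le_one fun x => by
    rw [hV.norm_map_of_map_zero (map_zero V), one_mul]
  calc ‖adjoint V ∘L a ∘L V‖ ≤ ‖adjoint V‖ * (‖a‖ * ‖V‖) :=
        (opNorm_comp_le _ _).trans (by gcongr; exact opNorm_comp_le _ _)
    _ = ‖a‖ * ‖V‖ ^ 2 := by rw [LinearIsometryEquiv.norm_map]; ring
    _ ≤ ‖a‖ := mul_le_of_le_one_right (norm_nonneg a) (pow_le_one₀ (norm_nonneg V) hV1)


theorem IsIdempotentElem.one_le_norm {A : Type*} [NonUnitalNormedRing A] {p : A}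
    (hp : IsIdempotentElem p) (h0 : p ≠ 0) : 1 ≤ ‖p‖ := by
  have hpos : 0 < ‖p‖ := norm_pos_iff.mpr h0
  refine le_of_mul_le_mul_left ?_ hpos
  rw [mul_one]
  calc ‖p‖ = ‖p * p‖ := by rw [hp.eq]
    _ ≤ ‖p‖ * ‖p‖ := norm_mul_le p p


theorem sum_mul_norm_le_norm_sum_smul_add {ι 𝕜 E : Type*} [RCLike 𝕜] [NormedAddCommGroup E]
    [NormedSpace 𝕜 E] (s : Finset ι) {u : ι → ℝ} (hu : ∀ k ∈ s, 0 ≤ u k) (x : ι → E) (y : E) :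
    (∑ k ∈ s, u k) * ‖y‖ ≤ ‖∑ k ∈ s, (u k : 𝕜) • x k‖ + ∑ k ∈ s, u k * ‖x k - y‖ := by
  have hdecomp : ((∑ k ∈ s, u k : ℝ) : 𝕜) • y
      = ∑ k ∈ s, (u k : 𝕜) • x k - ∑ k ∈ s, (u k : 𝕜) • (x k - y) := by
    simp only [smul_sub, sum_sub_distrib, RCLike.ofReal_sum, sum_smul, sub_sub_cancel]
  calc (∑ k ∈ s, u k) * ‖y‖ = ‖((∑ k ∈ s, u k : ℝ) : 𝕜) • y‖ := by
        rw [norm_smul, RCLike.norm_ofReal, abs_of_nonneg (sum_nonneg hu)]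
    _ ≤ ‖∑ k ∈ s, (u k : 𝕜) • x k‖ + ‖∑ k ∈ s, (u k : 𝕜) • (x k - y)‖ := by
        rw [hdecomp]; exact norm_sub_le _ _
    _ ≤ ‖∑ k ∈ s, (u k : 𝕜) • x k‖ + ∑ k ∈ s, u k * ‖x k - y‖ := by
        gcongr
        refine norm_sum_le_of_le _ fun k hk => ?_
        rw [norm_smul, RCLike.norm_ofReal, abs_of_nonneg (hu k hk)]

theorem sum_sub_mul_le_norm_sum_smul {ι 𝕜 E : Type*} [RCLike 𝕜] [NormedAddCommGroup E]
    [NormedSpace 𝕜 E] (s : Finset ι) {u c : ι → ℝ} (hu : ∀ k ∈ s, 0 ≤ u k ∧ u k ≤ c k)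
    {x : ι → E} {y : E} {ε : ℝ} (hy : 1 ≤ ‖y‖) (hx : ∀ k ∈ s, ‖x k - y‖ ≤ ε) :
    ∑ k ∈ s, u k - (∑ k ∈ s, c k) * ε ≤ ‖∑ k ∈ s, (u k : 𝕜) • x k‖ := by
  have hmass : ∑ k ∈ s, u k ≤ (∑ k ∈ s, u k) * ‖y‖ :=
    le_mul_of_one_le_right (sum_nonneg fun k hk => (hu k hk).1) hy
  have hspread : ∑ k ∈ s, u k * ‖x k - y‖ ≤ (∑ k ∈ s, c k) * ε := by
    rw [sum_mul]
    exact sum_le_sum fun k hk => mul_le_mul (hu k hk).2 (hx k hk) (norm_nonneg _)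
      ((hu k hk).1.trans (hu k hk).2)
  linarith [sum_mul_norm_le_norm_sum_smul_add (𝕜 := 𝕜) s (fun k hk => (hu k hk).1) x y]

theorem sum_ite_mul_eq_sub {ι : Type*} [Fintype ι] [DecidableEq ι] (c : ι → ℝ) (j : ι) (δ : ℝ) :
    ∑ k, (if k = j then 1 else 1 - δ) * c k = ∑ k, c k - δ * ∑ k ∈ univ.erase j, c k := by
  have hoff : ∀ k ∈ univ.erase j, (if k = j then 1 else 1 - δ) * c k = c k - δ * c k :=
    fun k hk => by rw [if_neg (ne_of_mem_erase hk)]; ring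
  rw [← add_sum_erase _ _ (mem_univ j), ← add_sum_erase _ c (mem_univ j), sum_congr rfl hoff,
    sum_sub_distrib, mul_sum, if_pos rfl]
  ring

theorem compression_norm_lower_bound_general
    {H : Type*} [NormedAddCommGroup H] [InnerProductSpace ℂ H] [CompleteSpace H]
    {d : ℕ} (c : Fin d → ℝ) (hc : ∀ j, 0 < c j)
    (ε : ℝ)
    (P : Fin d → EuclideanSpace ℂ (Fin 2) →L[ℂ] EuclideanSpace ℂ (Fin 2))
    (hPproj : ∀ j, P j * P j = P j)
    (hPrank : ∀ j, Module.finrank ℂ (LinearMap.range (P j : EuclideanSpace ℂ (Fin 2) →ₗ[ℂ] EuclideanSpace ℂ (Fin 2))) = 1)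
    (hPclose : ∀ j k, ‖P j - P k‖ ≤ ε)
    (Z : Fin d → H →L[ℂ] H)
    (hZpos : ∀ j, (0 : H →L[ℂ] H) ≤ Z j)
    (hZann : ∀ i j, i ≠ j → Z i * Z j = 0)
    (hZnorm : ∀ j, ‖Z j‖ ≤ 1)
    (V : EuclideanSpace ℂ (Fin 2) →L[ℂ] H) (hV : Isometry V)
    (hcomp : ∀ j, (c j : ℂ) • P j = ContinuousLinearMap.adjoint V ∘L Z j ∘L V) :
    ∀ (j : Fin d) (δ r : ℝ), 0 < δ → δ < 1 → 0 < r → r < 1 →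
      ∑ k ∈ Finset.univ.erase j, c k ≤ r →
      (∑ k, c k) * (1 - ε) - δ * r ≤ max ‖Z j‖ (1 - δ) := by
  intro j δ r hδ0 hδ1 _ _ hrsum
  set M := max ‖Z j‖ (1 - δ)
  set w : Fin d → ℝ := fun k => if k = j then 1 else 1 - δ with hw
  have hw01 : ∀ k, 0 ≤ w k ∧ w k ≤ 1 := fun k => by
    simp only [hw]; split_ifs <;> constructor <;> linarith
  have hwZ : ∀ k, |w k| * ‖Z k‖ ≤ M := fun k => by
    rw [abs_of_nonneg (hw01 k).1]
    by_cases hk : k = j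
    · simp [hw, hk, M]
    · exact (mul_le_of_le_one_right (hw01 k).1 (hZnorm k)).trans (by simp [hw, hk, M])
  have hnorm : ‖∑ k, (w k : ℂ) • Z k‖ ≤ M :=
    norm_sum_smul_le_of_pairwise_mul_eq_zero (fun k => (hZpos k).isSelfAdjoint)
      (fun i k => hZann i k) w ((sub_pos.mpr hδ1).le.trans (le_max_right _ _)) hwZ
  have hcompr : ContinuousLinearMap.adjoint V ∘L (∑ k, (w k : ℂ) • Z k) ∘L V
      = ∑ k, ((w k * c k : ℝ) : ℂ) • P k := by
    ext1 x
    simp [hcomp, mul_smul]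
  have hPj : 1 ≤ ‖P j‖ := IsIdempotentElem.one_le_norm (hPproj j) fun h => by
    have := hPrank j
    rw [h, ContinuousLinearMap.toLinearMap_zero, LinearMap.range_zero, finrank_bot] at this
    exact zero_ne_one this
  have hlow : ∑ k, w k * c k - (∑ k, c k) * ε ≤ ‖∑ k, ((w k * c k : ℝ) : ℂ) • P k‖ :=
    sum_sub_mul_le_norm_sum_smul univ (fun k _ => ⟨mul_nonneg (hw01 k).1 (hc k).le,
      mul_le_of_le_one_left (hc k).le (hw01 k).2⟩) hPj fun k _ => hPclose k j
  have hup : ‖∑ k, ((w k * c k : ℝ) : ℂ) • P k‖ ≤ M :=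
    hcompr ▸ (ContinuousLinearMap.norm_adjoint_comp_comp_le hV _).trans hnorm
  linarith [sum_ite_mul_eq_sub c j δ, mul_le_mul_of_nonneg_left hrsum hδ0.le]

/-- Let `c ∈ ℝ^d` with `c j > 0` and `∑ c j ≤ 1`, let `ε > 0`, and let
`P 1, …, P d` be rank-one orthogonal projections on `ℂ²` with `‖P j - P k‖ ≤ ε`.
Suppose `Z 1, …, Z d` are positive bounded operators with `Z i Z j = 0` for `i ≠ j`,
`‖Z j‖ ≤ 1`, and `c j • P j = V* ∘ Z j ∘ V` for an isometry `V : ℂ² → H`.  Then for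
each `j`, each `δ ∈ (0,1)` and each `r ∈ (0,1)` with `∑_{k ≠ j} c k ≤ r`, one has
`max {‖Z j‖, 1 - δ} ≥ ‖c‖₁ (1 - ε) - δ r`. -/
theorem compression_norm_lower_bound
    {H : Type*} [NormedAddCommGroup H] [InnerProductSpace ℂ H] [CompleteSpace H]
    {d : ℕ} (c : Fin d → ℝ) (hc : ∀ j, 0 < c j) (hc1 : ∑ j, c j ≤ 1)
    (ε : ℝ) (hε : 0 < ε)
    (P : Fin d → EuclideanSpace ℂ (Fin 2) →L[ℂ] EuclideanSpace ℂ (Fin 2))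
    (hPsa : ∀ j, IsSelfAdjoint (P j))
    (hPproj : ∀ j, P j * P j = P j)
    (hPrank : ∀ j, Module.finrank ℂ (LinearMap.range (P j : EuclideanSpace ℂ (Fin 2) →ₗ[ℂ] EuclideanSpace ℂ (Fin 2))) = 1)
    (hPclose : ∀ j k, ‖P j - P k‖ ≤ ε)
    (Z : Fin d → H →L[ℂ] H)
    (hZpos : ∀ j, (0 : H →L[ℂ] H) ≤ Z j)
    (hZann : ∀ i j, i ≠ j → Z i * Z j = 0)
    (hZnorm : ∀ j, ‖Z j‖ ≤ 1)
    (V : EuclideanSpace ℂ (Fin 2) →L[ℂ] H) (hV : Isometry V)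
    (hcomp : ∀ j, (c j : ℂ) • P j = ContinuousLinearMap.adjoint V ∘L Z j ∘L V) :
    ∀ (j : Fin d) (δ r : ℝ), 0 < δ → δ < 1 → 0 < r → r < 1 →
      ∑ k ∈ Finset.univ.erase j, c k ≤ r →
      (∑ k, c k) * (1 - ε) - δ * r ≤ max ‖Z j‖ (1 - δ) :=
  compression_norm_lower_bound_general c hc ε P hPproj hPrank hPclose Z hZpos hZann hZnorm V hV
    hcomp
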